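/- arXiv:1504.06005 — 2 statements merged into one kernel-verified Lean document; each statement's English description precedes it below -/
import Mathlib

section
/- If a ∈ A with φ(a) = 1, then the S-transform S_a(z) = ((1+z)/z)·𝒳_a(z) equals (1/z)·c_a^{⟨−1⟩}(z), where c_a(z) = Σ_{n≥1} κ_n(a) z^n is the free cumulant series and c_a^{⟨−1⟩} its compositional inverse. -/
open scoped Classical
noncomputable section

/-- Formal composition `f ∘ g` of power series (intended for `g` with zero constant
coefficient, in which case this is the usual substitution of `g` into `f`). -/
def pscomp (f g : PowerSeries ℂ) : PowerSeries ℂ :=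
  PowerSeries.mk fun n => ∑ k ∈ Finset.range (n + 1),
    (PowerSeries.coeff k f) * PowerSeries.coeff n (g ^ k)

/-- The series `Σ_{n ≥ 1} f n · zⁿ` associated to a sequence `f`. -/
def phiSeries (f : ℕ → ℂ) : PowerSeries ℂ :=
  PowerSeries.mk fun n => if n = 0 then 0 else f n

/-- A setoid (partition) is non-crossing with respect to a position key `k`:
there is no crossing `k a < k b < k c < k d` with `a ∼ c`, `b ∼ d`, `a ≁ b`. -/
def NonCrossingOn {α : Type*} (k : α → ℤ) (s : Setoid α) : Prop :=
  ∀ a b c d : α, k a < k b → k b < k c → k c < k d → s.r a c → s.r b d → s.r a b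

/-- Non-crossing partitions of `{1, …, n}` in the usual order. -/
def IsNC {n : ℕ} (s : Setoid (Fin n)) : Prop :=
  NonCrossingOn (fun i => (i.val : ℤ)) s

def half {n : ℕ} (x : Fin (2 * n)) : Fin n := ⟨x.val / 2, by omega⟩

/-- The interleaved partition on `{1, 1', 2, 2', …, n, n'}`: even positions are the
unprimed points, carrying `p`; odd positions are the primed points, carrying `t`. -/
def interleave {n : ℕ} (p t : Setoid (Fin n)) : Setoid (Fin (2 * n)) where
  r x y := x.val % 2 = y.val % 2 ∧ (x.val % 2 = 0 → p.r (half x) (half y)) ∧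
    (x.val % 2 = 1 → t.r (half x) (half y))
  iseqv := by
    refine ⟨fun x => ⟨rfl, fun _ => p.iseqv.refl _, fun _ => t.iseqv.refl _⟩, ?_, ?_⟩
    · rintro x y ⟨h1, h2, h3⟩
      exact ⟨h1.symm, fun h0 => p.iseqv.symm (h2 (h1.trans h0)),
        fun h0 => t.iseqv.symm (h3 (h1.trans h0))⟩
    · rintro x y z ⟨h1, h2, h3⟩ ⟨h1', h2', h3'⟩
      exact ⟨h1.trans h1', fun h0 => p.iseqv.trans (h2 h0) (h2' (h1.symm.trans h0)),
        fun h0 => t.iseqv.trans (h3 h0) (h3' (h1.symm.trans h0))⟩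

/-- The Kreweras complement of `p ∈ NC(n)`: the largest partition `t` of the primed
points such that the interleaving of `p` and `t` is non-crossing on `{1,1',…,n,n'}`. -/
def kreweras {n : ℕ} (p : Setoid (Fin n)) : Setoid (Fin n) :=
  sSup {t | IsNC (interleave p t)}

/-- The blocks of a partition, as a finset of finsets. -/
def blocksOf {n : ℕ} (s : Setoid (Fin n)) : Finset (Finset (Fin n)) :=
  Finset.univ.image fun i => Finset.univ.filter fun j => s.r i j

/-- The value `f(0_n, π) = ∏_{V block of π} f(0_{|V|}, 1_{|V|})` of the multiplicative
function determined by the sequence `f n = f(0_n, 1_n)`. -/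
def fval {n : ℕ} (f : ℕ → ℂ) (s : Setoid (Fin n)) : ℂ :=
  ∏ B ∈ blocksOf s, f B.card

instance setoidFintype (n : ℕ) : Fintype (Setoid (Fin n)) :=
  Fintype.ofInjective (fun s => fun a b : Fin n => decide (s.r a b)) (by
    intro s t h
    apply Setoid.ext
    intro a b
    have := congrFun (congrFun h a) b
    simpa [decide_eq_decide] using this)

/-- Restriction of a partition to a block `B`, relabelled along the order
isomorphism `Fin B.card ≃o B`. -/
def restrictS {n : ℕ} (s : Setoid (Fin n)) (B : Finset (Fin n)) : Setoid (Fin B.card) :=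
  Setoid.comap (fun j => (B.orderIsoOfFin rfl j).val) s

/-- The value on the interval `[ρ, σ]` of the (canonical multiplicative extension of
the) multiplicative function determined by the sequence `f`, via the canonical
decomposition `[ρ, σ] ≅ ∏_{B block of σ} [ρ|_B, 1_B]` and
`f(τ, 1_m) = ∏_{C block of K(τ)} f(0_{|C|}, 1_{|C|})`. -/
def intervalVal {n : ℕ} (f : ℕ → ℂ) (ρ σ : Setoid (Fin n)) : ℂ :=
  ∏ B ∈ blocksOf σ, fval f (kreweras (restrictS ρ B))

/-!
Let `M(z) = 1 + ψ(z)` be the moment series. Cut a non-crossing partition of `{0, …, n}` at the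
first return of the block of `0`: if that block next meets `m + 1`, the points `1, …, m` carry an
arbitrary non-crossing partition, and the points `m + 1, …, n` carry one whose first block is
merged with the block of `0`. So if `G_t` is the generating series of non-crossing partitions in
which the block `V` of `0` has weight `κ_{t + |V|}` instead of `κ_{|V|}`, then
`G_t = κ_t + z M G_{t+1}`. The unique solution of this recursion is `G_t = Σ_k κ_{t+k} (z M)^k`,
and `t = 0, 1` give the functional equation `c(z M(z)) = M(z) - 1 = ψ(z)`. Substituting
`z = 𝒳(z)` gives `c((1 + z) 𝒳(z)) = z`, so `(1 + z) 𝒳` is a right inverse of `c`, and hence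
equals its left inverse `c^{⟨-1⟩}`.
-/

open PowerSeries

namespace PowerSeries

variable {R : Type*} [CommRing R]

theorem subst_eq_C_add_mul_subst_shift {g : R⟦X⟧} (hg : HasSubst g) (f : R⟦X⟧) :
    subst g f = C (constantCoeff f) + g * subst g (mk fun p => coeff (p + 1) f) := by
  conv_lhs => rw [eq_X_mul_shift_add_const f]
  rw [subst_add hg, subst_mul hg, subst_X hg, subst_C, ← C_apply, add_comm]

theorem eq_of_subst_eq_X {f g u : R⟦X⟧} (hf : constantCoeff f = 0) (hu : constantCoeff u = 0)
    (hgf : subst f g = X) (hfu : subst u f = X) : g = u := by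
  have hf' := HasSubst.of_constantCoeff_zero' hf
  have hu' := HasSubst.of_constantCoeff_zero' hu
  calc g = subst (subst u f) g := by rw [hfu, X_subst]
    _ = subst u (subst f g) := (subst_comp_subst_apply hf' hu' g).symm
    _ = u := by rw [hgf, subst_X hu']

theorem eq_zero_of_forall_eq_X_mul {D : ℕ → R⟦X⟧} (g : R⟦X⟧) (hD : ∀ t, D t = X * g * D (t + 1))
    (t : ℕ) : D t = 0 := by
  have hdvd : ∀ n t, X ^ n ∣ D t := by
    intro n
    induction n with
    | zero => simp
    | succ n ih =>
      intro t
      rw [hD t, pow_succ', mul_assoc]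
      exact mul_dvd_mul_left X (dvd_mul_of_dvd_right (ih (t + 1)) g)
  ext n
  rw [map_zero]
  exact X_pow_dvd_iff.mp (hdvd (n + 1) t) n n.lt_succ_self

theorem eq_subst_of_forall_eq_C_add {a : ℕ → R} {M : R⟦X⟧} {G : ℕ → R⟦X⟧}
    (hG : ∀ t, G t = C (a t) + X * M * G (t + 1)) (t : ℕ) :
    G t = subst (X * M) (mk fun k => a (t + k)) := by
  have hXM : HasSubst (X * M) := HasSubst.of_constantCoeff_zero' (by simp)
  have hH : ∀ t, subst (X * M) (mk fun k => a (t + k)) =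
      C (a t) + X * M * subst (X * M) (mk fun k => a (t + 1 + k)) := fun t => by
    rw [subst_eq_C_add_mul_subst_shift hXM]
    simp only [coeff_mk, constantCoeff_mk, add_zero, add_assoc, add_comm 1]
  rw [← sub_eq_zero]
  refine eq_zero_of_forall_eq_X_mul (D := fun t => G t - subst (X * M) (mk fun k => a (t + k))) M
    (fun t => ?_) t
  rw [hG t, hH t]
  ring

end PowerSeries

theorem constantCoeff_pscomp (f g : PowerSeries ℂ) :
    constantCoeff (pscomp f g) = constantCoeff f := by
  rw [← coeff_zero_eq_constantCoeff_apply, pscomp, coeff_mk]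
  simp

theorem pscomp_eq_subst {f g : PowerSeries ℂ} (hg : constantCoeff g = 0) :
    pscomp f g = subst g f := by
  ext n
  rw [coeff_subst' (HasSubst.of_constantCoeff_zero' hg), pscomp, coeff_mk,
    finsum_eq_sum_of_support_subset (s := Finset.range (n + 1))]
  · simp only [smul_eq_mul]
  · intro k hk
    contrapose! hk
    have : X ^ k ∣ g ^ k := pow_dvd_pow_of_dvd (X_dvd_iff.mpr hg) k
    simp [X_pow_dvd_iff.mp this n (by simpa using hk)]

instance {α : Type*} [IsEmpty α] : Subsingleton (Setoid α) :=
  ⟨fun _ _ => Setoid.ext fun a => isEmptyElim a⟩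

theorem IsNC.rel_of_lt {n : ℕ} {s : Setoid (Fin n)} (hs : IsNC s) {a b c d : Fin n}
    (hab : a.val < b.val) (hbc : b.val < c.val) (hcd : c.val < d.val) (hac : s.r a c)
    (hbd : s.r b d) : s.r a b :=
  hs a b c d (by simpa using hab) (by simpa using hbc) (by simpa using hcd) hac hbd

theorem IsNC.comap {n p : ℕ} {s : Setoid (Fin n)} (hs : IsNC s) {e : Fin p → Fin n}
    (he : StrictMono e) : IsNC (s.comap e) := fun a b c d hab hbc hcd =>
  hs.rel_of_lt (he (by simpa using hab)) (he (by simpa using hbc)) (he (by simpa using hcd))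

namespace NonCrossing

open Finset

section Blocks

variable {n : ℕ}

def block (s : Setoid (Fin n)) (i : Fin n) : Finset (Fin n) :=
  univ.filter fun j => s.r i j

@[simp] theorem mem_block {s : Setoid (Fin n)} {i j : Fin n} : j ∈ block s i ↔ s.r i j := by
  simp [block]

theorem block_eq_block {s : Setoid (Fin n)} {i j : Fin n} (h : s.r i j) :
    block s i = block s j := by
  ext k
  simp only [mem_block]
  exact ⟨s.trans' (s.symm' h), s.trans' h⟩

def IsBlockMin (s : Setoid (Fin n)) (i : Fin n) : Prop := ∀ j, s.r i j → i ≤ j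

theorem exists_isBlockMin (s : Setoid (Fin n)) (i : Fin n) :
    ∃ j, IsBlockMin s j ∧ block s j = block s i := by
  have hne : (block s i).Nonempty := ⟨i, mem_block.2 (s.refl' i)⟩
  have hmem := mem_block.1 ((block s i).min'_mem hne)
  refine ⟨(block s i).min' hne, fun k hk => ?_, (block_eq_block hmem).symm⟩
  exact (block s i).min'_le k (mem_block.2 (s.trans' hmem hk))

def blockWeight (κ : ℕ → ℂ) (s : Setoid (Fin n)) (i : Fin n) : ℂ :=
  if IsBlockMin s i then κ (block s i).card else 1

theorem fval_eq_prod_blockWeight (κ : ℕ → ℂ) (s : Setoid (Fin n)) :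
    fval κ s = ∏ i, blockWeight κ s i := by
  have hinj : Set.InjOn (block s) {i | IsBlockMin s i} := by
    intro i hi j hj hij
    have hij' : s.r i j := mem_block.1 (hij ▸ mem_block.2 (s.refl' j))
    exact le_antisymm (hi j hij') (hj i (s.symm' hij'))
  have himage : (univ.filter (IsBlockMin s)).image (block s) = blocksOf s := by
    ext B
    simp only [blocksOf, mem_image, mem_filter, mem_univ, true_and]
    constructor
    · rintro ⟨i, -, rfl⟩
      exact ⟨i, rfl⟩
    · rintro ⟨i, rfl⟩
      exact exists_isBlockMin s i
  simp only [blockWeight]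
  rw [← prod_filter, fval, ← himage,
    prod_image fun i hi j hj => hinj (by simpa using hi) (by simpa using hj)]

theorem blockWeight_eq_one {κ : ℕ → ℂ} {s : Setoid (Fin n)} {i j : Fin n} (h : s.r j i)
    (hji : j < i) : blockWeight κ s i = 1 :=
  if_neg fun hmin => (hmin j (s.symm' h)).not_gt hji

theorem blockWeight_comap {p : ℕ} {κ : ℕ → ℂ} {s : Setoid (Fin n)} {e : Fin p → Fin n}
    (he : StrictMono e) {i : Fin p} (hi : ∀ y, s.r (e i) y → y ∈ Set.range e) :
    blockWeight κ (s.comap e) i = blockWeight κ s (e i) := by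
  have hblock : block s (e i) = (block (s.comap e) i).map ⟨e, he.injective⟩ := by
    ext y
    simp only [mem_block, mem_map, Function.Embedding.coeFn_mk, Setoid.comap_rel]
    constructor
    · intro hy
      obtain ⟨k, rfl⟩ := hi y hy
      exact ⟨k, hy, rfl⟩
    · rintro ⟨k, hk, rfl⟩
      exact hk
  have hmin : IsBlockMin (s.comap e) i ↔ IsBlockMin s (e i) := by
    simp only [IsBlockMin, Setoid.comap_rel]
    constructor
    · intro h y hy
      obtain ⟨k, rfl⟩ := hi y hy
      exact he.monotone (h k hy)
    · exact fun h k hk => he.le_iff_le.1 (h (e k) hk)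
  rw [blockWeight, blockWeight, hmin, hblock, card_map]

def headBlock (s : Setoid (Fin n)) : Finset (Fin n) :=
  univ.filter fun j => ∃ i : Fin n, i.val = 0 ∧ s.r i j

theorem headBlock_eq_block (s : Setoid (Fin (n + 1))) : headBlock s = block s 0 := by
  ext j
  simp only [headBlock, block, mem_filter, mem_univ, true_and]
  exact ⟨fun ⟨i, hi, h⟩ => (Fin.ext hi : i = 0) ▸ h, fun h => ⟨0, rfl, h⟩⟩

/-- The weight `fval κ s` with the block of `0` weighted by `κ (t + size)` instead of
`κ size`; on `Fin 0`, where there is no such block, it is `κ t`. -/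
def shiftedWeight (κ : ℕ → ℂ) (t : ℕ) (s : Setoid (Fin n)) : ℂ :=
  κ (t + (headBlock s).card) * ∏ i, if i.val = 0 then 1 else blockWeight κ s i

theorem shiftedWeight_zero (κ : ℕ → ℂ) (s : Setoid (Fin (n + 1))) :
    shiftedWeight κ 0 s = fval κ s := by
  have hmin : IsBlockMin s 0 := fun j _ => Fin.zero_le j
  rw [shiftedWeight, fval_eq_prod_blockWeight, Fin.prod_univ_succ, Fin.prod_univ_succ, zero_add,
    headBlock_eq_block, blockWeight, if_pos hmin]
  simp

end Blocks

def freeMoment (κ : ℕ → ℂ) (n : ℕ) : ℂ :=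
  ∑ π : {s : Setoid (Fin n) // IsNC s}, fval κ π.1

def shiftedMoment (κ : ℕ → ℂ) (t n : ℕ) : ℂ :=
  ∑ π : {s : Setoid (Fin n) // IsNC s}, shiftedWeight κ t π.1

theorem freeMoment_zero (κ : ℕ → ℂ) : freeMoment κ 0 = 1 := by
  rw [freeMoment, Fintype.sum_subsingleton _ ⟨⊥, fun a => a.elim0⟩]
  simp [fval, blocksOf]

theorem shiftedMoment_zero (κ : ℕ → ℂ) (t : ℕ) : shiftedMoment κ t 0 = κ t := by
  rw [shiftedMoment, Fintype.sum_subsingleton _ ⟨⊥, fun a => a.elim0⟩]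
  simp [shiftedWeight, headBlock]

theorem shiftedMoment_zero_succ (κ : ℕ → ℂ) (n : ℕ) :
    shiftedMoment κ 0 (n + 1) = freeMoment κ (n + 1) :=
  sum_congr rfl fun π _ => shiftedWeight_zero κ π.1

section Positions

variable {m r : ℕ}

def inner (j : Fin m) : Fin (m + r + 1) := (Fin.castAdd r j).succ

def outer (k : Fin r) : Fin (m + r + 1) := (Fin.natAdd m k).succ

@[simp] theorem val_inner (j : Fin m) : (inner (r := r) j).val = j + 1 := rfl

@[simp] theorem val_outer (k : Fin r) : (outer (m := m) k).val = m + k + 1 := rfl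

theorem strictMono_inner : StrictMono (inner (m := m) (r := r)) := fun i j h => by
  simp only [Fin.lt_def, val_inner] at h ⊢
  omega

theorem strictMono_outer : StrictMono (outer (m := m) (r := r)) := fun i j h => by
  simp only [Fin.lt_def, val_outer] at h ⊢
  omega

theorem eq_zero_or_inner_or_outer (x : Fin (m + r + 1)) :
    x = 0 ∨ (∃ j, x = inner j) ∨ ∃ k, x = outer k := by
  induction x using Fin.cases with
  | zero => exact Or.inl rfl
  | succ x =>
    induction x using Fin.addCases with
    | left j => exact Or.inr (Or.inl ⟨j, rfl⟩)
    | right k => exact Or.inr (Or.inr ⟨k, rfl⟩)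

@[to_additive]
theorem prod_univ_eq_zero_mul_inner_mul_outer {M : Type*} [CommMonoid M]
    (f : Fin (m + r + 1) → M) : ∏ x, f x = f 0 * (∏ j, f (inner j)) * ∏ k, f (outer k) := by
  rw [Fin.prod_univ_succ, Fin.prod_univ_add, mul_assoc]
  rfl

end Positions

/-- The number of points strictly between `0` and the next point of its block
(`n` if `0` is a singleton). -/
def firstGap {n : ℕ} (π : Setoid (Fin (n + 1))) : ℕ :=
  Nat.find (⟨n, fun x hx => absurd x.isLt (by omega)⟩ :
    ∃ m, ∀ x : Fin (n + 1), x.val = m + 1 → π.r 0 x)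

theorem firstGap_le {n : ℕ} (π : Setoid (Fin (n + 1))) : firstGap π ≤ n :=
  Nat.find_min' _ fun x hx => absurd x.isLt (by omega)

section FirstGap

variable {m r : ℕ} {π : Setoid (Fin (m + r + 1))}

theorem firstGap_eq_iff :
    firstGap π = m ↔ (∀ j, ¬ π.r 0 (inner j)) ∧ ∀ k : Fin r, k.val = 0 → π.r 0 (outer k) := by
  rw [firstGap, Nat.find_eq_iff, and_comm]
  refine and_congr ⟨fun h j hj => ?_, fun h i hi hall => ?_⟩
    ⟨fun h k hk => h _ (by simp [hk]), fun h x hx => ?_⟩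
  · exact h j j.isLt fun x hx => (Fin.ext (by simpa using hx) : x = inner j) ▸ hj
  · exact h ⟨i, hi⟩ (hall _ rfl)
  · obtain ⟨k, rfl⟩ : ∃ k : Fin r, outer k = x := ⟨⟨0, by omega⟩, Fin.ext (by simp [hx])⟩
    exact h k (by simpa using hx)

theorem not_rel_inner_outer (hπ : IsNC π) (hgap : firstGap π = m) (j : Fin m) (k : Fin r) :
    ¬ π.r (inner j) (outer k) := by
  obtain ⟨hinner, houter⟩ := firstGap_eq_iff.1 hgap
  have h₀ : π.r 0 (outer ⟨0, k.pos⟩) := houter _ rfl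
  intro h
  rcases Nat.eq_zero_or_pos k.val with hk | hk
  · rw [show k = ⟨0, k.pos⟩ from Fin.ext hk] at h
    exact hinner j (π.trans' h₀ (π.symm' h))
  · exact hinner j
      (hπ.rel_of_lt (c := outer ⟨0, k.pos⟩) (by simp) (by simp) (by simp; omega) h₀ h)

theorem rel_zero_outer_iff (hgap : firstGap π = m) (k : Fin r) :
    π.r 0 (outer k) ↔ π.r (outer ⟨0, k.pos⟩) (outer k) := by
  have h₀ : π.r 0 (outer ⟨0, k.pos⟩) := firstGap_eq_iff.1 hgap |>.2 _ rfl
  exact ⟨π.trans' (π.symm' h₀), π.trans' h₀⟩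

end FirstGap

section Glue

variable {m r : ℕ}

def headLabel (τ : Setoid (Fin r)) : Option (Quotient τ) :=
  if h : 0 < r then some (Quotient.mk τ ⟨0, h⟩) else none

/-- `0` gets the label of the first point after the gap, or a label of its own if there is
none. -/
def glueLabel (σ : Setoid (Fin m)) (τ : Setoid (Fin r)) :
    Fin (m + r + 1) → Quotient σ ⊕ Option (Quotient τ) :=
  Fin.cons (Sum.inr (headLabel τ))
    (Fin.append (fun j => Sum.inl (Quotient.mk σ j)) fun k => Sum.inr (some (Quotient.mk τ k)))

def glue (σ : Setoid (Fin m)) (τ : Setoid (Fin r)) : Setoid (Fin (m + r + 1)) :=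
  Setoid.ker (glueLabel σ τ)

variable {σ : Setoid (Fin m)} {τ : Setoid (Fin r)}

@[simp] theorem glueLabel_zero : glueLabel σ τ 0 = Sum.inr (headLabel τ) := rfl

@[simp] theorem glueLabel_inner (j : Fin m) :
    glueLabel σ τ (inner j) = Sum.inl (Quotient.mk σ j) := by
  simp [glueLabel, inner]

@[simp] theorem glueLabel_outer (k : Fin r) :
    glueLabel σ τ (outer k) = Sum.inr (some (Quotient.mk τ k)) := by
  simp [glueLabel, outer]

theorem glue_rel {x y : Fin (m + r + 1)} :
    (glue σ τ).r x y ↔ glueLabel σ τ x = glueLabel σ τ y :=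
  Iff.rfl

@[simp] theorem glue_inner_inner {i j : Fin m} :
    (glue σ τ).r (inner i) (inner j) ↔ σ.r i j := by
  simp [glue_rel, Quotient.eq]

@[simp] theorem glue_outer_outer {k l : Fin r} :
    (glue σ τ).r (outer k) (outer l) ↔ τ.r k l := by
  simp [glue_rel, Quotient.eq]

theorem glue_zero_outer {k : Fin r} : (glue σ τ).r 0 (outer k) ↔ τ.r ⟨0, k.pos⟩ k := by
  simp [glue_rel, Quotient.eq, headLabel, k.pos]

theorem not_glue_zero_inner (j : Fin m) : ¬ (glue σ τ).r 0 (inner j) := by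
  simp [glue_rel]

theorem not_glue_inner_outer (j : Fin m) (k : Fin r) : ¬ (glue σ τ).r (inner j) (outer k) := by
  simp [glue_rel]

theorem comap_inner_glue : (glue σ τ).comap inner = σ :=
  Setoid.ext fun _ _ => glue_inner_inner

theorem comap_outer_glue : (glue σ τ).comap outer = τ :=
  Setoid.ext fun _ _ => glue_outer_outer

theorem firstGap_glue : firstGap (glue σ τ) = m :=
  firstGap_eq_iff.2 ⟨not_glue_zero_inner, fun k hk =>
    glue_zero_outer.2 (by rw [show k = ⟨0, k.pos⟩ from Fin.ext hk])⟩

theorem isNC_glue (hσ : IsNC σ) (hτ : IsNC τ) : IsNC (glue σ τ) := by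
  intro a b c d hab hbc hcd hac hbd
  simp only [Nat.cast_lt, Fin.val_fin_lt] at hab hbc hcd
  rcases eq_zero_or_inner_or_outer a with rfl | ⟨a, rfl⟩ | ⟨a, rfl⟩ <;>
  rcases eq_zero_or_inner_or_outer b with rfl | ⟨b, rfl⟩ | ⟨b, rfl⟩ <;>
  rcases eq_zero_or_inner_or_outer c with rfl | ⟨c, rfl⟩ | ⟨c, rfl⟩ <;>
  rcases eq_zero_or_inner_or_outer d with rfl | ⟨d, rfl⟩ | ⟨d, rfl⟩ <;>
  simp only [Fin.lt_def, val_inner, val_outer, Fin.val_zero] at hab hbc hcd <;>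
  try omega
  all_goals first
    | exact absurd hac (not_glue_zero_inner _)
    | exact absurd hac (not_glue_inner_outer _ _)
    | exact absurd hbd (not_glue_inner_outer _ _)
    | skip
  -- What is left: `0` followed by three points after the gap, and four points on one side.
  · rw [glue_zero_outer] at hac ⊢
    rw [glue_outer_outer] at hbd
    rcases Nat.eq_zero_or_pos b.val with hb | hb
    · rw [show b = ⟨0, b.pos⟩ from Fin.ext hb]
    · exact hτ.rel_of_lt hb (by omega) (by omega) hac hbd
  · rw [glue_inner_inner] at hac hbd ⊢
    exact hσ.rel_of_lt (by omega) (by omega) (by omega) hac hbd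
  · rw [glue_outer_outer] at hac hbd ⊢
    exact hτ.rel_of_lt (by omega) (by omega) (by omega) hac hbd

theorem glue_comap_inner_comap_outer {π : Setoid (Fin (m + r + 1))} (hπ : IsNC π)
    (hgap : firstGap π = m) : glue (π.comap inner) (π.comap outer) = π := by
  have hinner := (firstGap_eq_iff.1 hgap).1
  have hmixed := not_rel_inner_outer hπ hgap
  refine Setoid.ext fun x y => ?_
  rcases eq_zero_or_inner_or_outer x with rfl | ⟨i, rfl⟩ | ⟨k, rfl⟩ <;>
  rcases eq_zero_or_inner_or_outer y with rfl | ⟨j, rfl⟩ | ⟨l, rfl⟩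
  · simp only [π.refl', (glue _ _).refl']
  · simp [not_glue_zero_inner, hinner]
  · rw [glue_zero_outer, rel_zero_outer_iff hgap]
    rfl
  · rw [(glue _ _).comm', π.comm']
    simp [not_glue_zero_inner, hinner]
  · exact glue_inner_inner
  · simp [not_glue_inner_outer, hmixed]
  · rw [(glue _ _).comm', π.comm', glue_zero_outer, rel_zero_outer_iff hgap]
    rfl
  · rw [(glue _ _).comm', π.comm']
    simp [not_glue_inner_outer, hmixed]
  · exact glue_outer_outer

end Glue

section Decomposition

variable {m r : ℕ} {π : Setoid (Fin (m + r + 1))} (κ : ℕ → ℂ) (t : ℕ)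

theorem card_headBlock (hgap : firstGap π = m) :
    (headBlock π).card = (headBlock (π.comap outer)).card + 1 := by
  have hinner := (firstGap_eq_iff.1 hgap).1
  rw [headBlock_eq_block, block, card_filter, sum_univ_eq_zero_add_inner_add_outer, headBlock,
    card_filter, add_comm]
  simp only [π.refl', if_true, hinner, if_false, sum_const_zero, add_zero]
  congr 1
  refine sum_congr rfl fun k _ => if_congr ?_ rfl rfl
  rw [rel_zero_outer_iff hgap]
  exact ⟨fun h => ⟨_, rfl, h⟩, fun ⟨i, hi, h⟩ => (Fin.ext hi : i = ⟨0, k.pos⟩) ▸ h⟩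

theorem blockWeight_inner (hπ : IsNC π) (hgap : firstGap π = m) (j : Fin m) :
    blockWeight κ π (inner j) = blockWeight κ (π.comap inner) j := by
  refine (blockWeight_comap strictMono_inner fun y hy => ?_).symm
  rcases eq_zero_or_inner_or_outer y with rfl | ⟨i, rfl⟩ | ⟨k, rfl⟩
  · exact absurd (π.symm' hy) ((firstGap_eq_iff.1 hgap).1 j)
  · exact ⟨i, rfl⟩
  · exact absurd hy (not_rel_inner_outer hπ hgap j k)

theorem blockWeight_outer (hπ : IsNC π) (hgap : firstGap π = m) (k : Fin r) :
    blockWeight κ π (outer k) = if k.val = 0 then 1 else blockWeight κ (π.comap outer) k := by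
  by_cases h₀ : π.r 0 (outer k)
  · rw [blockWeight_eq_one h₀ (by simp [Fin.lt_def])]
    split_ifs with hk
    · rfl
    · exact (blockWeight_eq_one (j := ⟨0, k.pos⟩) ((rel_zero_outer_iff hgap k).1 h₀)
        (by simp [Fin.lt_def]; omega)).symm
  · have hk : k.val ≠ 0 := fun hk => h₀ ((firstGap_eq_iff.1 hgap).2 k hk)
    rw [if_neg hk]
    refine (blockWeight_comap strictMono_outer fun y hy => ?_).symm
    rcases eq_zero_or_inner_or_outer y with rfl | ⟨j, rfl⟩ | ⟨l, rfl⟩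
    · exact absurd (π.symm' hy) h₀
    · exact absurd (π.symm' hy) (not_rel_inner_outer hπ hgap j k)
    · exact ⟨l, rfl⟩

theorem shiftedWeight_eq_mul (hπ : IsNC π) (hgap : firstGap π = m) :
    shiftedWeight κ t π = fval κ (π.comap inner) * shiftedWeight κ (t + 1) (π.comap outer) := by
  rw [shiftedWeight, shiftedWeight, fval_eq_prod_blockWeight,
    prod_univ_eq_zero_mul_inner_mul_outer, card_headBlock hgap]
  simp only [Fin.val_zero, if_true, val_inner, val_outer, Nat.add_one_ne_zero, if_false,
    blockWeight_inner κ hπ hgap, blockWeight_outer κ hπ hgap, one_mul]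
  rw [add_comm _ 1, ← add_assoc]
  ring

theorem sum_filter_firstGap_eq :
    ∑ π ∈ univ.filter (fun π : {s : Setoid (Fin (m + r + 1)) // IsNC s} => firstGap π.1 = m),
      shiftedWeight κ t π.1 = freeMoment κ m * shiftedMoment κ (t + 1) r := by
  rw [freeMoment, shiftedMoment, sum_mul_sum, ← sum_product']
  refine sum_nbij' (fun π => (⟨π.1.comap inner, π.2.comap strictMono_inner⟩,
      ⟨π.1.comap outer, π.2.comap strictMono_outer⟩))
    (fun p => ⟨glue p.1.1 p.2.1, isNC_glue p.1.2 p.2.2⟩) (by simp) (by simp [firstGap_glue])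
    (fun π hπ => Subtype.ext (glue_comap_inner_comap_outer π.2 (mem_filter.1 hπ).2))
    (fun p _ => by ext1 <;> exact Subtype.ext (by simp [comap_inner_glue, comap_outer_glue]))
    (fun π hπ => shiftedWeight_eq_mul κ t π.2 (mem_filter.1 hπ).2)

end Decomposition

theorem shiftedMoment_succ (κ : ℕ → ℂ) (t n : ℕ) :
    shiftedMoment κ t (n + 1) =
      ∑ p ∈ antidiagonal n, freeMoment κ p.1 * shiftedMoment κ (t + 1) p.2 := by
  rw [shiftedMoment, ← sum_fiberwise_of_maps_to (t := range (n + 1)) (g := fun π => firstGap π.1)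
    (fun π _ => mem_range.2 (Nat.lt_succ_of_le (firstGap_le π.1))),
    Nat.sum_antidiagonal_eq_sum_range_succ_mk]
  refine sum_congr rfl fun m hm => ?_
  obtain ⟨r, rfl⟩ : ∃ r, n = m + r := ⟨n - m, by simp at hm; omega⟩
  rw [Nat.add_sub_cancel_left]
  exact sum_filter_firstGap_eq κ t

def momentSeries (κ : ℕ → ℂ) : PowerSeries ℂ := mk (freeMoment κ)

def shiftedMomentSeries (κ : ℕ → ℂ) (t : ℕ) : PowerSeries ℂ := mk (shiftedMoment κ t)

theorem shiftedMomentSeries_eq (κ : ℕ → ℂ) (t : ℕ) :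
    shiftedMomentSeries κ t = C (κ t) + X * momentSeries κ * shiftedMomentSeries κ (t + 1) := by
  ext (_ | n)
  · simp [shiftedMomentSeries, shiftedMoment_zero]
  · rw [map_add, coeff_C, if_neg n.add_one_ne_zero, zero_add, mul_assoc, coeff_succ_X_mul,
      coeff_mul]
    simp [shiftedMomentSeries, momentSeries, shiftedMoment_succ]

theorem X_mul_momentSeries_mul_shiftedMomentSeries_one (κ : ℕ → ℂ) :
    X * momentSeries κ * shiftedMomentSeries κ 1 = momentSeries κ - 1 := by
  have h : shiftedMomentSeries κ 0 = momentSeries κ - 1 + C (κ 0) := by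
    ext (_ | n)
    · simp [shiftedMomentSeries, momentSeries, shiftedMoment_zero, freeMoment_zero]
    · simp [shiftedMomentSeries, momentSeries, shiftedMoment_zero_succ]
  linear_combination (shiftedMomentSeries_eq κ 0).symm.trans h

theorem subst_phiSeries_eq_momentSeries_sub_one (κ : ℕ → ℂ) :
    subst (X * momentSeries κ) (phiSeries κ) = momentSeries κ - 1 := by
  have hshift : (mk fun p => coeff (p + 1) (phiSeries κ)) = mk fun k => κ (1 + k) := by
    ext p
    simp [phiSeries, add_comm]
  rw [subst_eq_C_add_mul_subst_shift (HasSubst.of_constantCoeff_zero' (by simp)), hshift,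
    ← eq_subst_of_forall_eq_C_add (shiftedMomentSeries_eq κ) 1,
    X_mul_momentSeries_mul_shiftedMomentSeries_one]
  simp [phiSeries]

end NonCrossing

open NonCrossing

theorem s_transform_eq_inv_cumulant_series_general
    (A : Type*) [Ring A] [Algebra ℂ A] (φ : A →ₗ[ℂ] ℂ) (a : A)
    (κ : ℕ → ℂ)
    (hMC : ∀ n : ℕ, φ (a ^ n) = ∑ π : {s : Setoid (Fin n) // IsNC s}, fval κ π.1)
    (ψ 𝒳 cInv : PowerSeries ℂ)
    (hψ : ψ = PowerSeries.mk fun n => if n = 0 then 0 else φ (a ^ n))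
    (h𝒳 : pscomp ψ 𝒳 = PowerSeries.X ∧ pscomp 𝒳 ψ = PowerSeries.X)
    (hcInv : pscomp (phiSeries κ) cInv = PowerSeries.X ∧
      pscomp cInv (phiSeries κ) = PowerSeries.X) :
    (1 + PowerSeries.X) * 𝒳 = cInv := by
  have h𝒳₀ : constantCoeff 𝒳 = 0 := by rw [← constantCoeff_pscomp 𝒳 ψ, h𝒳.2, constantCoeff_X]
  have h𝒳' : HasSubst 𝒳 := HasSubst.of_constantCoeff_zero' h𝒳₀
  have hc₀ : constantCoeff (phiSeries κ) = 0 := by simp [phiSeries]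
  have hψ𝒳 : subst 𝒳 ψ = X := (pscomp_eq_subst h𝒳₀).symm.trans h𝒳.1
  have hM : momentSeries κ = 1 + ψ := by
    ext (_ | n)
    · simp [momentSeries, hψ, freeMoment_zero]
    · simp [momentSeries, hψ, freeMoment, hMC]
  have hu : subst 𝒳 (X * momentSeries κ) = (1 + X) * 𝒳 := by
    rw [hM, mul_add, mul_one, subst_add h𝒳', subst_mul h𝒳', subst_X h𝒳', hψ𝒳]
    ring
  refine (eq_of_subst_eq_X hc₀ (by simp [h𝒳₀]) ((pscomp_eq_subst hc₀).symm.trans hcInv.2) ?_).symm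
  rw [← hu, ← subst_comp_subst_apply (HasSubst.of_constantCoeff_zero' (by simp)) h𝒳',
    subst_phiSeries_eq_momentSeries_sub_one, hM, add_sub_cancel_left, hψ𝒳]

/-- If `a ∈ A` with `φ(a) = 1`, then the `S`-transform
`S_a(z) = ((1+z)/z)·𝒳_a(z)` equals `(1/z)·c_a^{⟨−1⟩}(z)`; equivalently (multiplying
through by `z`), `(1 + z)·𝒳_a(z) = c_a^{⟨−1⟩}(z)`.  Here `𝒳_a` is the compositional
inverse of `ψ_a(z) = Σ_{n≥1} φ(aⁿ) zⁿ`, and the free cumulants `κ_n(a)` are defined by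
the moment–cumulant relation over non-crossing partitions, with cumulant series
`c_a(z) = Σ_{n≥1} κ_n(a) zⁿ` and compositional inverse `cInv`. -/
theorem s_transform_eq_inv_cumulant_series
    (A : Type*) [Ring A] [Algebra ℂ A] (φ : A →ₗ[ℂ] ℂ) (hφ1 : φ 1 = 1) (a : A)
    (ha : φ a = 1)
    (κ : ℕ → ℂ)
    (hMC : ∀ n : ℕ, φ (a ^ n) = ∑ π : {s : Setoid (Fin n) // IsNC s}, fval κ π.1)
    (ψ 𝒳 cInv : PowerSeries ℂ)
    (hψ : ψ = PowerSeries.mk fun n => if n = 0 then 0 else φ (a ^ n))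
    (h𝒳 : pscomp ψ 𝒳 = PowerSeries.X ∧ pscomp 𝒳 ψ = PowerSeries.X)
    (hcInv : pscomp (phiSeries κ) cInv = PowerSeries.X ∧
      pscomp cInv (phiSeries κ) = PowerSeries.X) :
    (1 + PowerSeries.X) * 𝒳 = cInv :=
  s_transform_eq_inv_cumulant_series_general A φ a κ hMC ψ 𝒳 cInv hψ h𝒳 hcInv
end
end

section
/- For any π ∈ NC(n), the Kreweras complement K(π) is the unique non-crossing partition τ of {1',…,n'} such that π ∪ τ is non-crossing on the interleaved set {1,1',2,2',…,n,n'} and (π ∪ τ) ∨ σ = 1_{2n}, where σ is the partition with blocks {k,k'} for 1 ≤ k ≤ n. -/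
open scoped Classical
noncomputable section

/-!
Let `sameArcs p` relate `i'` and `j'` when the same arcs of `p` pass over them. A non-crossing
`p ∪ τ` forces `τ ≤ sameArcs p`, and `p ∪ sameArcs p` is itself non-crossing, so `sameArcs p` is
the Kreweras complement. Joining with `σ` only identifies `k` with `k'`, so the join condition
reads `p ⊔ τ = 1_n`. It holds for `sameArcs p` because `k` and `k + 1` are always linked: if
`k + 1` starts its block of `p`, then `k'` lies under the same arcs as the last point of that
block, and otherwise under the same arcs as the previous point of that block.

For uniqueness count blocks. If `p ⊔ τ = 1_n`, the graph on the blocks of `p` and of `τ`, with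
an edge for each point joining its two blocks, is connected with at most `n` edges, so
`|p| + |τ| ≤ n + 1`. On the other hand `|p| + |sameArcs p| = n + 1`, since `k` ends a block of
`sameArcs p` exactly when `k + 1` does not start a block of `p`. So `τ ≤ sameArcs p` has at least
as many blocks as `sameArcs p`, and the two are equal.
-/

open Finset

section BlockGraph

variable {α : Type*} {p t : Setoid α}

def blockGraph (p t : Setoid α) : SimpleGraph (Quotient p ⊕ Quotient t) :=
  SimpleGraph.fromRel fun u v => ∃ i, u = .inl (Quotient.mk p i) ∧ v = .inr (Quotient.mk t i)

theorem blockGraph_adj_mk (i : α) :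
    (blockGraph p t).Adj (.inl (Quotient.mk p i)) (.inr (Quotient.mk t i)) :=
  (SimpleGraph.fromRel_adj _ _ _).mpr ⟨Sum.inl_ne_inr, .inl ⟨i, rfl, rfl⟩⟩

theorem blockGraph_connected [Nonempty α] (h : p ⊔ t = ⊤) : (blockGraph p t).Connected := by
  set G := blockGraph p t
  have hreach : p ⊔ t ≤ Setoid.comap (fun i => .inl (Quotient.mk p i)) G.reachableSetoid := by
    refine sup_le (fun i j hij => ?_) (fun i j hij => ?_)
    · simp [Setoid.comap_rel, Quotient.sound hij]
    · refine (blockGraph_adj_mk i).reachable.trans ?_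
      rw [Quotient.sound hij]
      exact (blockGraph_adj_mk j).reachable.symm
  have hroot (u) : ∃ i, G.Reachable (.inl (Quotient.mk p i)) u := by
    rcases u with u | u <;> induction u using Quotient.ind with
    | _ i => first | exact ⟨i, .refl _⟩ | exact ⟨i, (blockGraph_adj_mk i).reachable⟩
  obtain ⟨i₀⟩ := ‹Nonempty α›
  refine (SimpleGraph.connected_iff_exists_forall_reachable G).mpr ⟨.inl (Quotient.mk p i₀), ?_⟩
  intro u
  obtain ⟨i, hi⟩ := hroot u
  exact (hreach (h ▸ trivial : (p ⊔ t) i₀ i)).trans hi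

theorem card_edgeSet_blockGraph_le [Finite α] :
    Nat.card (blockGraph p t).edgeSet ≤ Nat.card α := by
  refine Nat.card_le_card_of_surjective (fun i => ⟨s(_, _), blockGraph_adj_mk i⟩) ?_
  rintro ⟨e, he⟩
  induction e using Sym2.ind with | _ u v => ?_
  rw [SimpleGraph.mem_edgeSet, blockGraph, SimpleGraph.fromRel_adj] at he
  obtain ⟨-, ⟨i, rfl, rfl⟩ | ⟨i, rfl, rfl⟩⟩ := he
  · exact ⟨i, rfl⟩
  · exact ⟨i, Subtype.ext Sym2.eq_swap⟩

theorem card_quotient_add_card_quotient_le [Finite α] (h : p ⊔ t = ⊤) :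
    Nat.card (Quotient p) + Nat.card (Quotient t) ≤ Nat.card α + 1 := by
  rcases isEmpty_or_nonempty α with hα | hα
  · simp
  have := (blockGraph_connected h).card_vert_le_card_edgeSet_add_one
  rw [Nat.card_sum] at this
  have := card_edgeSet_blockGraph_le (p := p) (t := t)
  omega

end BlockGraph

section BlockCount

variable {α : Type*} (s : Setoid α)

theorem card_quotient_eq_card_filter [Fintype α] {P : α → Prop} [DecidablePred P]
    (hinj : ∀ i j, P i → P j → s i j → i = j) (hsurj : ∀ i, ∃ j, P j ∧ s i j) :
    Nat.card (Quotient s) = #{i | P i} := by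
  rw [← Fintype.card_subtype, ← Nat.card_eq_fintype_card]
  refine (Nat.card_eq_of_bijective (fun i : {i // P i} => Quotient.mk s i) ⟨?_, ?_⟩).symm
  · exact fun i j hij => Subtype.ext (hinj i j i.2 j.2 (Quotient.exact hij))
  · refine Quotient.ind fun i => ?_
    obtain ⟨j, hj, hij⟩ := hsurj i
    exact ⟨⟨j, hj⟩, Quotient.sound (s.symm hij)⟩

variable [LinearOrder α]

def IsBlockMax (i : α) : Prop := ∀ j, s i j → j ≤ i

def IsBlockMin (i : α) : Prop := ∀ j, s i j → i ≤ j

variable [Fintype α]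

theorem card_quotient_eq_card_isBlockMax : Nat.card (Quotient s) = #{i | IsBlockMax s i} := by
  refine card_quotient_eq_card_filter s (fun i j hi hj hij => le_antisymm (hj i (s.symm hij))
    (hi j hij)) fun i => ?_
  obtain ⟨j, hij, hmax⟩ := Set.exists_max_image {j | s i j} id (Set.toFinite _) ⟨i, s.refl i⟩
  exact ⟨j, fun k hjk => hmax k (s.trans hij hjk), hij⟩

theorem card_quotient_eq_card_isBlockMin : Nat.card (Quotient s) = #{i | IsBlockMin s i} := by
  refine card_quotient_eq_card_filter s (fun i j hi hj hij => le_antisymm (hi j hij)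
    (hj i (s.symm hij))) fun i => ?_
  obtain ⟨j, hij, hmin⟩ := Set.exists_min_image {j | s i j} id (Set.toFinite _) ⟨i, s.refl i⟩
  exact ⟨j, fun k hjk => hmin k (s.trans hij hjk), hij⟩

end BlockCount

theorem Setoid.eq_of_le_of_card_quotient_le {α : Type*} [Finite α] {p t : Setoid α} (hle : p ≤ t)
    (hcard : Nat.card (Quotient p) ≤ Nat.card (Quotient t)) : p = t := by
  have hsurj : Function.Surjective (Setoid.map_of_le hle) :=
    Quotient.ind fun i => ⟨Quotient.mk p i, rfl⟩
  have hinj := ((Nat.bijective_iff_surjective_and_card _).mpr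
    ⟨hsurj, le_antisymm hcard (Nat.card_le_card_of_surjective _ hsurj)⟩).1
  exact le_antisymm hle fun i j hij => Quotient.exact (hinj (Quotient.sound hij :
    Setoid.map_of_le hle (Quotient.mk p i) = Setoid.map_of_le hle (Quotient.mk p j)))

theorem Setoid.eq_top_of_rel_castSucc_succ {m : ℕ} {s : Setoid (Fin (m + 1))}
    (h : ∀ a : Fin m, s a.castSucc a.succ) : s = ⊤ := by
  have h0 (i : Fin (m + 1)) : s 0 i := Fin.induction (s.refl 0) (fun a ha => s.trans ha (h a)) i
  exact Setoid.eq_top_iff.mpr fun i j => s.trans (s.symm (h0 i)) (h0 j)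

section Interleave

variable {n : ℕ}

theorem isNC_iff {s : Setoid (Fin n)} :
    IsNC s ↔ ∀ a b c d, a < b → b < c → c < d → s a c → s b d → s a b := by
  simp only [IsNC, NonCrossingOn, Nat.cast_lt, Fin.val_fin_lt]

theorem IsNC.mem_Ioo_of_rel {p : Setoid (Fin n)} (hp : IsNC p) {u v x y : Fin n} (huv : p u v)
    (hx : x ∈ Set.Ioo u v) (hpux : ¬ p u x) (hxy : p x y) : y ∈ Set.Ioo u v := by
  obtain ⟨hux, hxv⟩ := hx
  have hp' := isNC_iff.mp hp
  refine ⟨lt_of_not_ge fun hyu => hpux ?_, lt_of_not_ge fun hvy => hpux ?_⟩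
  · rcases hyu.lt_or_eq with hyu | rfl
    · exact p.trans (p.symm (hp' y u x v hyu hux hxv (p.symm hxy) huv)) (p.symm hxy)
    · exact p.symm hxy
  · rcases hvy.lt_or_eq with hvy | rfl
    · exact hp' u x v y hux hxv hvy huv hxy
    · exact p.trans huv (p.symm hxy)

def unprimed (a : Fin n) : Fin (2 * n) := ⟨2 * a, by omega⟩

def primed (a : Fin n) : Fin (2 * n) := ⟨2 * a + 1, by omega⟩

@[simp] theorem val_unprimed (a : Fin n) : (unprimed a).val = 2 * a := rfl

@[simp] theorem val_primed (a : Fin n) : (primed a).val = 2 * a + 1 := rfl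

theorem forall_fin_two_mul {P : Fin (2 * n) → Prop} :
    (∀ x, P x) ↔ (∀ a, P (unprimed a)) ∧ (∀ a, P (primed a)) := by
  refine ⟨fun h => ⟨fun a => h _, fun a => h _⟩, fun ⟨hu, hp⟩ x => ?_⟩
  obtain ⟨k, hk | hk⟩ := Nat.even_or_odd' x.val
  · simpa [unprimed, ← hk] using hu ⟨k, by omega⟩
  · simpa [primed, ← hk] using hp ⟨k, by omega⟩

@[simp] theorem half_unprimed (a : Fin n) : half (unprimed a) = a := by
  ext; simp [half]

@[simp] theorem half_primed (a : Fin n) : half (primed a) = a := by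
  ext; simp [half]; omega

@[simp] theorem unprimed_lt_unprimed {a b : Fin n} : unprimed a < unprimed b ↔ a < b := by
  simp only [Fin.lt_def, val_unprimed]; omega

@[simp] theorem primed_lt_primed {a b : Fin n} : primed a < primed b ↔ a < b := by
  simp only [Fin.lt_def, val_primed]; omega

@[simp] theorem unprimed_lt_primed {a b : Fin n} : unprimed a < primed b ↔ a ≤ b := by
  simp only [Fin.lt_def, Fin.le_def, val_unprimed, val_primed]; omega

@[simp] theorem primed_lt_unprimed {a b : Fin n} : primed a < unprimed b ↔ a < b := by
  simp only [Fin.lt_def, val_unprimed, val_primed]; omega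

variable {p t : Setoid (Fin n)} {a b : Fin n}

theorem interleave_apply {x y : Fin (2 * n)} : interleave p t x y ↔ x.val % 2 = y.val % 2 ∧
    (x.val % 2 = 0 → p (half x) (half y)) ∧ (x.val % 2 = 1 → t (half x) (half y)) :=
  Iff.rfl

@[simp] theorem interleave_unprimed_unprimed :
    interleave p t (unprimed a) (unprimed b) ↔ p a b := by
  simp [interleave_apply]

@[simp] theorem interleave_primed_primed : interleave p t (primed a) (primed b) ↔ t a b := by
  simp [interleave_apply, Nat.add_mod]

@[simp] theorem not_interleave_unprimed_primed :
    ¬ interleave p t (unprimed a) (primed b) := by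
  simp [interleave_apply, Nat.add_mod]

@[simp] theorem not_interleave_primed_unprimed :
    ¬ interleave p t (primed a) (unprimed b) := by
  simp [interleave_apply, Nat.add_mod]

theorem isNC_interleave_iff :
    IsNC (interleave p t) ↔ IsNC p ∧ IsNC t ∧
      (∀ a b c d, a ≤ b → b < c → c ≤ d → p a c → ¬ t b d) ∧
      (∀ a b c d, a < b → b ≤ c → c < d → t a c → ¬ p b d) := by
  simp only [isNC_iff, forall_fin_two_mul, unprimed_lt_unprimed, primed_lt_primed,
    unprimed_lt_primed, primed_lt_unprimed, interleave_unprimed_unprimed, interleave_primed_primed,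
    not_interleave_unprimed_primed, not_interleave_primed_unprimed, imp_false,
    implies_true, and_true, true_and, false_implies, forall_and]
  tauto

theorem interleave_sup_ker_half :
    interleave p t ⊔ Setoid.ker half = Setoid.comap half (p ⊔ t) := by
  set J := interleave p t ⊔ Setoid.ker half
  have hint {x y} (h : interleave p t x y) : J x y := le_sup_left (a := interleave p t) h
  have hker {x y} (h : half x = half y) : J x y := le_sup_right (b := Setoid.ker half) h
  apply le_antisymm
  · refine sup_le (fun x y hxy => ?_) (fun x y hxy => ?_)
    · obtain ⟨hxy, hp, ht⟩ := interleave_apply.mp hxy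
      obtain h | h := Nat.mod_two_eq_zero_or_one x
      exacts [le_sup_left (a := p) (hp h), le_sup_right (b := t) (ht h)]
    · exact (Setoid.comap_rel _ _ _ _).mpr (Setoid.ker_def.mp hxy ▸ (p ⊔ t).refl _)
  · have hpt : p ⊔ t ≤ Setoid.comap unprimed J := by
      refine sup_le (fun a b hab => hint (by simpa using hab)) (fun a b hab => ?_)
      have : J (primed a) (primed b) := hint (by simpa using hab)
      exact J.trans (hker (by simp)) (J.trans this (hker (by simp)))
    intro x y hxy
    exact J.trans (hker (by simp)) (J.trans (hpt hxy) (hker (by simp)))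

theorem interleave_sup_ker_half_eq_top_iff :
    interleave p t ⊔ Setoid.ker half = ⊤ ↔ p ⊔ t = ⊤ := by
  simp only [interleave_sup_ker_half, Setoid.eq_top_iff, Setoid.comap_rel]
  exact ⟨fun h a b => by simpa using h (unprimed a) (unprimed b), fun h x y => h _ _⟩

end Interleave

section SameArcs

variable {n : ℕ} {p t : Setoid (Fin n)} {i j : Fin n}

/-- The arcs `(a, b)` of `p` passing over the primed point `i'`, which sits between `i` and
`i + 1`. -/
def arcsOver (p : Setoid (Fin n)) (i : Fin n) : Set (Fin n × Fin n) :=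
  {ab | p ab.1 ab.2 ∧ ab.1 ≤ i ∧ i < ab.2}

def sameArcs (p : Setoid (Fin n)) : Setoid (Fin n) := Setoid.ker (arcsOver p)

theorem sameArcs_iff (hij : i ≤ j) :
    sameArcs p i j ↔ ∀ a b, p a b → a ∈ Set.Ioc i j → b ∈ Set.Ioc i j := by
  rw [sameArcs, Setoid.ker_def, Set.ext_iff]
  simp only [arcsOver, Set.mem_ofPred_eq, Set.mem_Ioc, Prod.forall]
  constructor
  · intro h a b hab ⟨hia, haj⟩
    by_contra hb
    rcases le_or_gt b i with hbi | hib
    · have := ((h b a).mp ⟨p.symm hab, hbi, hia⟩).2.2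
      order
    · have := ((h a b).mpr ⟨hab, haj, lt_of_not_ge fun hbj => hb ⟨hib, hbj⟩⟩).2.1
      order
  · intro h a b
    constructor
    · rintro ⟨hab, hai, hib⟩
      refine ⟨hab, hai.trans hij, lt_of_not_ge fun hbj => ?_⟩
      have := (h b a (p.symm hab) ⟨hib, hbj⟩).1
      order
    · rintro ⟨hab, haj, hjb⟩
      refine ⟨hab, le_of_not_gt fun hia => ?_, hij.trans_lt hjb⟩
      have := (h a b hab ⟨hia, haj⟩).2
      order

theorem isNC_sameArcs : IsNC (sameArcs p) := by
  refine isNC_iff.mpr fun i j k l hij hjk hkl hik hjl => ?_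
  rw [sameArcs_iff (hij.trans hjk).le] at hik
  rw [sameArcs_iff (hjk.trans hkl).le] at hjl
  refine (sameArcs_iff hij.le).mpr fun a b hab ⟨hia, haj⟩ => ?_
  obtain ⟨hib, hbk⟩ := hik a b hab ⟨hia, haj.trans hjk.le⟩
  refine ⟨hib, le_of_not_gt fun hjb => ?_⟩
  have := (hjl b a (p.symm hab) ⟨hjb, hbk.trans hkl.le⟩).1
  order

theorem isNC_interleave_sameArcs (hp : IsNC p) : IsNC (interleave p (sameArcs p)) := by
  refine isNC_interleave_iff.mpr ⟨hp, isNC_sameArcs, fun a b c d hab hbc hcd hac hbd => ?_,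
    fun a b c d hab hbc hcd hac hbd => ?_⟩
  · have := ((sameArcs_iff (hbc.le.trans hcd)).mp hbd c a (p.symm hac) ⟨hbc, hcd⟩).1
    order
  · have := ((sameArcs_iff (hab.le.trans hbc)).mp hac b d hbd ⟨hab, hbc⟩).2
    order

theorem le_sameArcs (h : IsNC (interleave p t)) : t ≤ sameArcs p := by
  obtain ⟨-, -, hpt, htp⟩ := isNC_interleave_iff.mp h
  intro i j hij
  wlog hle : i ≤ j generalizing i j
  · exact (sameArcs p).symm (this (t.symm hij) (le_of_not_ge hle))
  refine (sameArcs_iff hle).mpr fun a b hab ⟨hia, haj⟩ => ?_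
  by_contra hb
  rcases le_or_gt b i with hbi | hib
  · exact hpt b i a j hbi hia haj (p.symm hab) hij
  · exact htp i a j b hia haj (lt_of_not_ge fun hbj => hb ⟨hib, hbj⟩) hij hab

theorem kreweras_eq_sameArcs (hp : IsNC p) : kreweras p = sameArcs p :=
  le_antisymm (sSup_le fun _ ht => le_sameArcs ht) (le_sSup (isNC_interleave_sameArcs hp))

end SameArcs

section Successor

variable {m : ℕ} {p : Setoid (Fin (m + 1))}

theorem exists_sameArcs_of_isBlockMin_succ (hp : IsNC p) {a : Fin m}
    (hmin : IsBlockMin p a.succ) : ∃ c, a.castSucc < c ∧ sameArcs p a.castSucc c ∧ p a.succ c := by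
  obtain ⟨c, hc, hmax⟩ :=
    Set.exists_max_image {b | p a.succ b} id (Set.toFinite _) ⟨a.succ, p.refl _⟩
  have hac : a.castSucc < c := Fin.castSucc_lt_succ.trans_le (hmin c hc)
  refine ⟨c, hac, (sameArcs_iff hac.le).mpr fun x y hxy ⟨hax, hxc⟩ => ?_, hc⟩
  rw [Fin.castSucc_lt_iff_succ_le] at hax
  by_cases hx : p a.succ x
  · have hy := p.trans hx hxy
    exact ⟨Fin.castSucc_lt_iff_succ_le.mpr (hmin y hy), hmax y hy⟩
  · have hx' : x ∈ Set.Ioo a.succ c :=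
      ⟨lt_of_le_of_ne hax fun h => hx (h ▸ p.refl _), lt_of_le_of_ne hxc fun h => hx (h ▸ hc)⟩
    obtain ⟨h1, h2⟩ := hp.mem_Ioo_of_rel hc hx' hx hxy
    exact ⟨Fin.castSucc_lt_succ.trans h1, h2.le⟩

theorem exists_sameArcs_of_not_isBlockMin_succ (hp : IsNC p) {a : Fin m}
    (hmin : ¬ IsBlockMin p a.succ) : ∃ b, sameArcs p a.castSucc b ∧ p b a.succ := by
  simp only [IsBlockMin, not_forall, not_le] at hmin
  obtain ⟨b₀, hb₀, hb₀a⟩ := hmin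
  obtain ⟨b, ⟨hba, hb⟩, hmax⟩ := Set.exists_max_image {b | b < a.succ ∧ p b a.succ} id
    (Set.toFinite _) ⟨b₀, hb₀a, p.symm hb₀⟩
  have hb' : b ≤ a.castSucc := Fin.le_castSucc_iff.mpr hba
  refine ⟨b, (sameArcs p).symm ((sameArcs_iff hb').mpr fun x y hxy ⟨hbx, hxa⟩ => ?_), hb⟩
  rw [Fin.le_castSucc_iff] at hxa
  have hbx' : ¬ p b x := fun h => (hmax x ⟨hxa, p.trans (p.symm h) hb⟩).not_gt hbx
  obtain ⟨h1, h2⟩ := hp.mem_Ioo_of_rel hb ⟨hbx, hxa⟩ hbx' hxy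
  exact ⟨h1, Fin.le_castSucc_iff.mpr h2⟩

theorem sup_sameArcs_castSucc_succ (hp : IsNC p) (a : Fin m) :
    (p ⊔ sameArcs p) a.castSucc a.succ := by
  have hK {i j} (h : sameArcs p i j) : (p ⊔ sameArcs p) i j := le_sup_right (b := sameArcs p) h
  have hP {i j} (h : p i j) : (p ⊔ sameArcs p) i j := le_sup_left (a := p) h
  by_cases hmin : IsBlockMin p a.succ
  · obtain ⟨c, -, hac, hc⟩ := exists_sameArcs_of_isBlockMin_succ hp hmin
    exact (p ⊔ sameArcs p).trans (hK hac) (hP (p.symm hc))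
  · obtain ⟨b, hab, hb⟩ := exists_sameArcs_of_not_isBlockMin_succ hp hmin
    exact (p ⊔ sameArcs p).trans (hK hab) (hP hb)

theorem isBlockMax_sameArcs_castSucc_iff (hp : IsNC p) (a : Fin m) :
    IsBlockMax (sameArcs p) a.castSucc ↔ ¬ IsBlockMin p a.succ := by
  constructor
  · intro hmax hmin
    obtain ⟨c, hac, hK, -⟩ := exists_sameArcs_of_isBlockMin_succ hp hmin
    exact (hmax c hK).not_gt hac
  · intro hmin j hj
    by_contra! haj
    refine hmin fun b hb => ?_
    have := ((sameArcs_iff haj.le).mp hj a.succ b hb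
      ⟨Fin.castSucc_lt_succ, Fin.castSucc_lt_iff_succ_le.mp haj⟩).1
    exact Fin.castSucc_lt_iff_succ_le.mp this

theorem card_quotient_sameArcs_add_card_quotient (hp : IsNC p) :
    Nat.card (Quotient (sameArcs p)) + Nat.card (Quotient p) = m + 2 := by
  have hterm (a : Fin m) : ((if IsBlockMax (sameArcs p) a.castSucc then 1 else 0) +
      if IsBlockMin p a.succ then 1 else 0) = 1 := by
    rw [isBlockMax_sameArcs_castSucc_iff hp]
    split_ifs <;> rfl
  have hsum := sum_add_distrib (s := univ)
    (f := fun a : Fin m => if IsBlockMax (sameArcs p) a.castSucc then 1 else 0)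
    (g := fun a => if IsBlockMin p a.succ then 1 else 0)
  simp only [hterm, sum_const, card_univ, Fintype.card_fin, smul_eq_mul, mul_one] at hsum
  have hlast : IsBlockMax (sameArcs p) (Fin.last m) := fun j _ => Fin.le_last j
  have hzero : IsBlockMin p 0 := fun j _ => Fin.zero_le j
  rw [card_quotient_eq_card_isBlockMax, card_quotient_eq_card_isBlockMin, card_filter, card_filter,
    Fin.sum_univ_castSucc, Fin.sum_univ_succ, if_pos hlast, if_pos hzero]
  omega

end Successor

section Kreweras

variable {n : ℕ} {p t : Setoid (Fin n)}

theorem sup_sameArcs_eq_top (hp : IsNC p) : p ⊔ sameArcs p = ⊤ := by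
  cases n with
  | zero => exact Setoid.eq_top_iff.mpr fun i => i.elim0
  | succ m => exact Setoid.eq_top_of_rel_castSucc_succ (sup_sameArcs_castSucc_succ hp)

theorem card_quotient_le_card_quotient_sameArcs (hp : IsNC p) (h : p ⊔ t = ⊤) :
    Nat.card (Quotient t) ≤ Nat.card (Quotient (sameArcs p)) := by
  cases n with
  | zero => simp
  | succ m =>
    have hle := card_quotient_add_card_quotient_le h
    have heq := card_quotient_sameArcs_add_card_quotient hp
    rw [Nat.card_fin] at hle
    omega

end Kreweras

/-- For any `π ∈ NC(n)`, the Kreweras complement `K(π)` is the unique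
partition `τ` of the primed points `{1',…,n'}` such that `π ∪ τ` is non-crossing on the
interleaved set `{1,1',2,2',…,n,n'}` and `(π ∪ τ) ∨ σ = 1_{2n}`, where `σ` is the
partition with blocks `{k, k'}` for `1 ≤ k ≤ n` (here `σ = Setoid.ker half`, the join
`⊔` is taken in the lattice of all partitions of the `2n` points, and `⊤ = 1_{2n}`). -/
theorem kreweras_unique_characterization (n : ℕ) (p : Setoid (Fin n)) (hp : IsNC p)
    (t : Setoid (Fin n)) :
    (IsNC (interleave p t) ∧ interleave p t ⊔ Setoid.ker (half (n := n)) = ⊤) ↔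
      t = kreweras p := by
  rw [kreweras_eq_sameArcs hp, interleave_sup_ker_half_eq_top_iff]
  constructor
  · rintro ⟨hnc, htop⟩
    exact Setoid.eq_of_le_of_card_quotient_le (le_sameArcs hnc)
      (card_quotient_le_card_quotient_sameArcs hp htop)
  · rintro rfl
    exact ⟨isNC_interleave_sameArcs hp, sup_sameArcs_eq_top hp⟩
end
end
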